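/- Let (Q_i(t), \dot Q_i(t))_{i=1}^N be a solution of the Newtonian N-body problem defined on [0, ∞) that is superhyperbolic, i.e. max_i |Q_i(t)|/t → ∞ as t → ∞. Then liminf_{t→∞} min_{i≠j} |Q_i(t) − Q_j(t)| = 0. -/

import Mathlib

open Filter

lemma hasDerivAt_norm_inv {E : Type*} [NormedAddCommGroup E] [InnerProductSpace ℝ E]
    {x : ℝ → E} {x' : E} {t : ℝ} (hx : HasDerivAt x x' t) (hne : x t ≠ 0) :
    HasDerivAt (fun s => (‖x s‖)⁻¹) (-(inner ℝ (x t) x' : ℝ) / ‖x t‖ ^ 3) t := by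
  have hg : HasDerivAt (fun s => (inner ℝ (x s) (x s) : ℝ)) (2 * inner ℝ (x t) x') t := by
    have h := HasDerivAt.inner ℝ hx hx
    refine h.congr_deriv (Eq.symm ?_)
    rw [real_inner_comm (x t) x']; ring
  have hgt : (inner ℝ (x t) (x t) : ℝ) ≠ 0 := by
    rw [real_inner_self_eq_norm_sq]
    exact pow_ne_zero _ (norm_ne_zero_iff.mpr hne)
  have hr : HasDerivAt (fun s => Real.sqrt (inner ℝ (x s) (x s) : ℝ))
      ((2 * inner ℝ (x t) x') / (2 * Real.sqrt (inner ℝ (x t) (x t) : ℝ))) t := hg.sqrt hgt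
  have hnorm : ∀ s, Real.sqrt (inner ℝ (x s) (x s) : ℝ) = ‖x s‖ := fun s => by
    rw [real_inner_self_eq_norm_sq, Real.sqrt_sq (norm_nonneg _)]
  have hr' : HasDerivAt (fun s => ‖x s‖) ((inner ℝ (x t) x' : ℝ) / ‖x t‖) t := by
    have h := hr
    simp only [hnorm] at h
    convert h using 1
    have h0 : ‖x t‖ ≠ 0 := norm_ne_zero_iff.mpr hne
    field_simp
  have h0 : ‖x t‖ ≠ 0 := norm_ne_zero_iff.mpr hne
  have h := hr'.inv h0
  refine h.congr_deriv (Eq.symm ?_)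
  rw [neg_div, neg_div, div_div, pow_succ', sq]

/-- For a superhyperbolic solution of the Newtonian `N`-body problem on `[0, ∞)`,
the liminf of the minimal mutual distance tends to `0`. -/
theorem superhyperbolic_liminf_min_dist_eq_zero
    (N d : ℕ) (m : Fin N → ℝ) (hm : ∀ i, 0 < m i)
    (Q : Fin N → ℝ → EuclideanSpace ℝ (Fin d))
    (hne : ((Finset.univ : Finset (Fin N × Fin N)).filter fun p => p.1 ≠ p.2).Nonempty)
    (hneN : (Finset.univ : Finset (Fin N)).Nonempty)
    (hsmooth : ∀ i, ContDiff ℝ 2 (Q i))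
    (hsep : ∀ t ∈ Set.Ici (0:ℝ), ∀ i j, i ≠ j → Q i t ≠ Q j t)
    (hnewton : ∀ i, ∀ t ∈ Set.Ici (0:ℝ),
      m i • deriv (deriv (Q i)) t =
        ∑ j ∈ Finset.univ.filter (· ≠ i),
          (m i * m j / ‖Q i t - Q j t‖ ^ 3) • (Q j t - Q i t))
    (hsh : Tendsto (fun t => (Finset.univ.sup' hneN fun i => ‖Q i t‖) / t) atTop atTop) :
    Filter.liminf
      (fun t => (((Finset.univ : Finset (Fin N × Fin N)).filter fun p => p.1 ≠ p.2).inf' hne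
        fun p => ‖Q p.1 t - Q p.2 t‖)) atTop = 0 := by
  classical
  set S : Finset (Fin N × Fin N) :=
    (Finset.univ : Finset (Fin N × Fin N)).filter (fun p => p.1 ≠ p.2) with hSdef
  -- the key claim: for every ε > 0, the minimal distance is frequently below ε
  have key : ∀ ε : ℝ, 0 < ε →
      ∃ᶠ t in atTop, (S.inf' hne fun p => ‖Q p.1 t - Q p.2 t‖) < ε := by
    intro ε hε
    by_contra hcon
    rw [not_frequently] at hcon
    simp only [not_lt] at hcon
    rw [eventually_atTop] at hcon
    obtain ⟨T, hT⟩ := hcon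
    set T₀ : ℝ := max T 0 with hT₀def
    have hT₀0 : (0:ℝ) ≤ T₀ := le_max_right _ _
    have hpair : ∀ t, T₀ ≤ t → ∀ p ∈ S, ε ≤ ‖Q p.1 t - Q p.2 t‖ := by
      intro t ht p hp
      exact le_trans (hT t (le_trans (le_max_left _ _) ht)) (Finset.inf'_le _ hp)
    -- differentiability
    have hQdiff : ∀ i, Differentiable ℝ (Q i) := fun i =>
      (hsmooth i).differentiable (by norm_num)
    have hVdiff : ∀ i, Differentiable ℝ (deriv (Q i)) := by
      intro i
      have h : ContDiff ℝ (1 + 1) (Q i) := by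
        have := hsmooth i
        norm_num at this ⊢
        exact this
      exact ((contDiff_succ_iff_deriv.mp h).2.2).differentiable one_ne_zero
    have hQd : ∀ i t, HasDerivAt (Q i) (deriv (Q i) t) t := fun i t =>
      (hQdiff i t).hasDerivAt
    have hVd : ∀ i t, HasDerivAt (deriv (Q i)) (deriv (deriv (Q i)) t) t := fun i t =>
      (hVdiff i t).hasDerivAt
    -- energy
    set K : ℝ → ℝ := fun t => ∑ i, (m i / 2) * (inner ℝ (deriv (Q i) t) (deriv (Q i) t) : ℝ)
      with hKdef
    set U : ℝ → ℝ := fun t => (1/2) * ∑ p ∈ S, m p.1 * m p.2 * (‖Q p.1 t - Q p.2 t‖)⁻¹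
      with hUdef
    set Egy : ℝ → ℝ := fun t => K t - U t with hEgydef
    have hKd : ∀ t : ℝ, HasDerivAt K
        (∑ i, m i * (inner ℝ (deriv (deriv (Q i)) t) (deriv (Q i) t) : ℝ)) t := by
      intro t
      rw [hKdef]
      refine HasDerivAt.fun_sum fun i _ => ?_
      have h := (HasDerivAt.inner ℝ (hVd i t) (hVd i t)).const_mul (m i / 2)
      refine h.congr_deriv (Eq.symm ?_)
      rw [real_inner_comm (deriv (Q i) t) (deriv (deriv (Q i)) t)]
      ring
    have hUd : ∀ t : ℝ, T₀ ≤ t → HasDerivAt U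
        ((1/2) * ∑ p ∈ S, m p.1 * m p.2 *
          (-(inner ℝ (Q p.1 t - Q p.2 t) (deriv (Q p.1) t - deriv (Q p.2) t) : ℝ)
            / ‖Q p.1 t - Q p.2 t‖ ^ 3)) t := by
      intro t ht
      rw [hUdef]
      refine HasDerivAt.const_mul (1/2) (HasDerivAt.fun_sum fun p hp => ?_)
      have hx : Q p.1 t - Q p.2 t ≠ 0 := by
        have := hpair t ht p hp
        intro h
        rw [h, norm_zero] at this
        linarith
      exact (hasDerivAt_norm_inv ((hQd p.1 t).sub (hQd p.2 t)) hx).const_mul (m p.1 * m p.2)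
    -- the algebraic identity K' = U' (using Newton's equations)
    have halg : ∀ t, T₀ ≤ t →
        (∑ i, m i * (inner ℝ (deriv (deriv (Q i)) t) (deriv (Q i) t) : ℝ)) =
        (1/2) * ∑ p ∈ S, m p.1 * m p.2 *
          (-(inner ℝ (Q p.1 t - Q p.2 t) (deriv (Q p.1) t - deriv (Q p.2) t) : ℝ)
            / ‖Q p.1 t - Q p.2 t‖ ^ 3) := by
      intro t ht
      have ht0 : t ∈ Set.Ici (0:ℝ) := le_trans hT₀0 ht
      set g1 : Fin N × Fin N → ℝ := fun p =>
        m p.1 * m p.2 / ‖Q p.1 t - Q p.2 t‖ ^ 3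
          * (inner ℝ (Q p.1 t - Q p.2 t) (deriv (Q p.1) t) : ℝ) with hg1
      have step2 : ∀ f : Fin N × Fin N → ℝ,
          ∑ p ∈ S, f p = ∑ i, ∑ j ∈ Finset.univ.filter (· ≠ i), f (i, j) := by
        intro f
        rw [hSdef, Finset.sum_filter, Fintype.sum_prod_type]
        refine Finset.sum_congr rfl fun i _ => ?_
        rw [Finset.sum_filter]
        refine Finset.sum_congr rfl fun j _ => ?_
        by_cases h : i = j <;> simp [h, eq_comm]
      have hL : (∑ i, m i * (inner ℝ (deriv (deriv (Q i)) t) (deriv (Q i) t) : ℝ))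
          = -∑ p ∈ S, g1 p := by
        have step1 : ∀ i, m i * (inner ℝ (deriv (deriv (Q i)) t) (deriv (Q i) t) : ℝ)
            = ∑ j ∈ Finset.univ.filter (· ≠ i),
                (m i * m j / ‖Q i t - Q j t‖ ^ 3) * (inner ℝ (Q j t - Q i t) (deriv (Q i) t) : ℝ) := by
          intro i
          rw [← real_inner_smul_left, hnewton i t ht0, sum_inner]
          exact Finset.sum_congr rfl fun j _ => by rw [real_inner_smul_left]
        rw [Finset.sum_congr rfl fun i _ => step1 i, ← step2
          (fun p => (m p.1 * m p.2 / ‖Q p.1 t - Q p.2 t‖ ^ 3)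
            * (inner ℝ (Q p.2 t - Q p.1 t) (deriv (Q p.1) t) : ℝ)),
          ← Finset.sum_neg_distrib]
        refine Finset.sum_congr rfl fun p _ => ?_
        rw [hg1]
        rw [show Q p.2 t - Q p.1 t = -(Q p.1 t - Q p.2 t) from (neg_sub _ _).symm,
          inner_neg_left]
        ring
      have hswap : ∑ p ∈ S, (m p.1 * m p.2 / ‖Q p.1 t - Q p.2 t‖ ^ 3)
            * (inner ℝ (Q p.1 t - Q p.2 t) (deriv (Q p.2) t) : ℝ)
          = -∑ p ∈ S, g1 p := by
        rw [← Finset.sum_neg_distrib]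
        refine Finset.sum_equiv (Equiv.prodComm (Fin N) (Fin N)) ?_ ?_
        · intro p
          simp [hSdef, ne_comm]
        · intro p _
          simp only [Equiv.prodComm_apply, Prod.swap]
          rw [hg1]
          simp only
          rw [norm_sub_rev (Q p.2 t),
            show Q p.2 t - Q p.1 t = -(Q p.1 t - Q p.2 t) from (neg_sub _ _).symm,
            inner_neg_left]
          ring
      have hR : (1/2) * ∑ p ∈ S, m p.1 * m p.2 *
            (-(inner ℝ (Q p.1 t - Q p.2 t) (deriv (Q p.1) t - deriv (Q p.2) t) : ℝ)
              / ‖Q p.1 t - Q p.2 t‖ ^ 3)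
          = -∑ p ∈ S, g1 p := by
        have hterm : ∀ p ∈ S, m p.1 * m p.2 *
              (-(inner ℝ (Q p.1 t - Q p.2 t) (deriv (Q p.1) t - deriv (Q p.2) t) : ℝ)
                / ‖Q p.1 t - Q p.2 t‖ ^ 3)
            = -g1 p + (m p.1 * m p.2 / ‖Q p.1 t - Q p.2 t‖ ^ 3)
                * (inner ℝ (Q p.1 t - Q p.2 t) (deriv (Q p.2) t) : ℝ) := by
          intro p _
          rw [inner_sub_right, hg1]
          ring
        rw [Finset.sum_congr rfl hterm, Finset.sum_add_distrib, hswap,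
          Finset.sum_neg_distrib]
        ring
      rw [hL, hR]
    have hEd : ∀ t, T₀ ≤ t → HasDerivAt Egy 0 t := by
      intro t ht
      have h := (hKd t).sub (hUd t ht)
      rw [hEgydef]
      refine h.congr_deriv (Eq.symm ?_)
      rw [halg t ht]
      ring
    have hEconst : ∀ t, T₀ ≤ t → Egy t = Egy T₀ := by
      intro t ht
      exact constant_of_has_deriv_right_zero
        (fun x hx => (hEd x hx.1).continuousAt.continuousWithinAt)
        (fun x hx => (hEd x hx.1).hasDerivWithinAt)
        t (Set.right_mem_Icc.mpr ht)
    -- bound the potential, hence kinetic energy, hence velocities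
    set Umax : ℝ := (1/2) * ∑ p ∈ S, m p.1 * m p.2 * ε⁻¹ with hUmax
    have hUb : ∀ t, T₀ ≤ t → U t ≤ Umax := by
      intro t ht
      rw [hUdef, hUmax]
      refine mul_le_mul_of_nonneg_left (Finset.sum_le_sum fun p hp => ?_) (by norm_num)
      have h1 : ε ≤ ‖Q p.1 t - Q p.2 t‖ := hpair t ht p hp
      have h2 : (‖Q p.1 t - Q p.2 t‖)⁻¹ ≤ ε⁻¹ := by
        apply inv_anti₀ hε h1
      exact mul_le_mul_of_nonneg_left h2 (mul_nonneg (hm _).le (hm _).le)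
    set B : ℝ := Egy T₀ + Umax with hB
    have hKb : ∀ t, T₀ ≤ t → K t ≤ B := by
      intro t ht
      have h1 : Egy t = K t - U t := by rw [hEgydef]
      have h2 := hEconst t ht
      have h3 := hUb t ht
      rw [hB]
      linarith
    set C : ℝ := Finset.univ.sup' hneN (fun i => Real.sqrt (2 * B / m i)) with hC
    have hC0 : 0 ≤ C := by
      obtain ⟨i0, _⟩ := hneN
      rw [hC]
      exact le_trans (Real.sqrt_nonneg (2 * B / m i0))
        (Finset.le_sup' (fun i => Real.sqrt (2 * B / m i)) (Finset.mem_univ i0))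
    have hVb : ∀ i t, T₀ ≤ t → ‖deriv (Q i) t‖ ≤ C := by
      intro i t ht
      have hterm : ∀ j ∈ (Finset.univ : Finset (Fin N)),
          0 ≤ (m j / 2) * (inner ℝ (deriv (Q j) t) (deriv (Q j) t) : ℝ) := fun j _ =>
        mul_nonneg (by linarith [hm j]) real_inner_self_nonneg
      have h1 : (m i / 2) * (inner ℝ (deriv (Q i) t) (deriv (Q i) t) : ℝ) ≤ K t := by
        rw [hKdef]
        exact Finset.single_le_sum hterm (Finset.mem_univ i)
      have h2 : (m i / 2) * ‖deriv (Q i) t‖ ^ 2 ≤ B := by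
        rw [← real_inner_self_eq_norm_sq]
        exact le_trans h1 (hKb t ht)
      have h3 : ‖deriv (Q i) t‖ ^ 2 ≤ 2 * B / m i := by
        rw [le_div_iff₀ (hm i)]
        nlinarith
      calc ‖deriv (Q i) t‖ = Real.sqrt (‖deriv (Q i) t‖ ^ 2) :=
            (Real.sqrt_sq (norm_nonneg _)).symm
        _ ≤ Real.sqrt (2 * B / m i) := Real.sqrt_le_sqrt h3
        _ ≤ C := by
          rw [hC]
          exact Finset.le_sup' (fun i => Real.sqrt (2 * B / m i)) (Finset.mem_univ i)
    -- positions grow at most linearly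
    have hpos : ∀ i, ∀ t, T₀ ≤ t → ‖Q i t‖ ≤ ‖Q i T₀‖ + C * (t - T₀) := by
      intro i t ht
      have h := norm_image_sub_le_of_norm_deriv_le_segment'
        (fun x _ => (hQd i x).hasDerivWithinAt)
        (fun x hx => hVb i x hx.1) t (Set.right_mem_Icc.mpr ht)
      have h2 := norm_sub_norm_le (Q i t) (Q i T₀)
      linarith
    set Bq : ℝ := Finset.univ.sup' hneN (fun i => ‖Q i T₀‖) with hBq
    have hBq0 : 0 ≤ Bq := by
      obtain ⟨i0, _⟩ := hneN
      rw [hBq]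
      exact le_trans (norm_nonneg (Q i0 T₀)) (Finset.le_sup' (fun i => ‖Q i T₀‖) (Finset.mem_univ i0))
    have hsup : ∀ t, max T₀ 1 ≤ t →
        (Finset.univ.sup' hneN fun i => ‖Q i t‖) / t ≤ Bq + C := by
      intro t ht
      have ht1 : (1:ℝ) ≤ t := le_trans (le_max_right _ _) ht
      have ht0 : T₀ ≤ t := le_trans (le_max_left _ _) ht
      have htpos : (0:ℝ) < t := lt_of_lt_of_le one_pos ht1
      rw [div_le_iff₀ htpos]
      refine Finset.sup'_le _ _ fun i _ => ?_
      have h1 := hpos i t ht0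
      have h2 : ‖Q i T₀‖ ≤ Bq := by
        rw [hBq]; exact Finset.le_sup' (fun i => ‖Q i T₀‖) (Finset.mem_univ i)
      nlinarith [mul_nonneg hBq0 (by linarith : (0:ℝ) ≤ t - 1),
        mul_nonneg hC0 hT₀0]
    obtain ⟨t, h1, h2⟩ :=
      ((hsh.eventually_ge_atTop (Bq + C + 1)).and (eventually_ge_atTop (max T₀ 1))).exists
    have := hsup t h2
    linarith
  -- conclude about the liminf
  have hbdd : IsBoundedUnder (· ≥ ·) atTop
      (fun t => S.inf' hne fun p => ‖Q p.1 t - Q p.2 t‖) := by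
    refine ⟨0, ?_⟩
    rw [eventually_map]
    exact Eventually.of_forall fun t => Finset.le_inf' hne _ fun p _ => norm_nonneg _
  have hcob : IsCoboundedUnder (· ≥ ·) atTop
      (fun t => S.inf' hne fun p => ‖Q p.1 t - Q p.2 t‖) :=
    IsCoboundedUnder.of_frequently_le ((key 1 one_pos).mono fun t ht => le_of_lt ht)
  refine le_antisymm ?_ ?_
  · refine le_of_forall_pos_le_add fun ε hε => ?_
    have h := liminf_le_of_frequently_le ((key ε hε).mono fun t ht => le_of_lt ht) hbdd
    linarith
  · exact le_liminf_of_le hcob (Eventually.of_forall fun t =>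
      Finset.le_inf' hne _ fun p _ => norm_nonneg _)
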